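/- arXiv:1801.07220 — 3 statements merged into one kernel-verified Lean document; each statement's English description precedes it below -/
import Mathlib

section
/- Let α ∈ (0,1) and let Y be an essentially bounded random variable on (Ω, 𝓕, P). Then EVaR_α^p(|Y|) → ‖Y‖_∞ as p ↑ 0 (i.e. p → 0 through negative values), where ‖Y‖_∞ is the essential supremum of |Y|. -/
open MeasureTheory Real Filter

noncomputable section

variable {Ω : Type*} [MeasurableSpace Ω]

/-- `Z` is a probability density with respect to `P`. -/
def IsDensity (P : Measure Ω) (Z : Ω → ℝ) : Prop :=
  Integrable Z P ∧ 0 ≤ᵐ[P] Z ∧ ∫ ω, Z ω ∂P = 1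

/-- The Rényi entropy of order `q` of a density `Z`. -/
def renyiEntropy (P : Measure Ω) (Z : Ω → ℝ) (q : ℝ) : ℝ :=
  if q = 0 then -Real.log (P {ω | 0 < Z ω}).toReal
  else if q = 1 then ∫ ω, Z ω * Real.log (Z ω) ∂P
  else (q - 1)⁻¹ * Real.log (∫ ω, Z ω ^ q ∂P)

/-- The Rényi entropy of order `q` of `Z` is well defined and finite:
the defining expectation is finite, and for negative orders `Z > 0` a.s. -/
def RenyiFinite (P : Measure Ω) (Z : Ω → ℝ) (q : ℝ) : Prop :=
  (q = 1 → Integrable (fun ω => Z ω * Real.log (Z ω)) P) ∧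
  (q ≠ 0 → q ≠ 1 → Integrable (fun ω => Z ω ^ q) P) ∧
  (q < 0 → ∀ᵐ ω ∂P, 0 < Z ω)

/-- Entropic Value-at-Risk with Rényi-entropy constraint of (dual/conjugate) order `q`:
the supremum of `E[Y Z]` over all densities `Z` with well-defined Rényi entropy
`H_q(Z) ≤ log (1/(1-α))` (and `E[Y Z]` defined). -/
def EVaRd (P : Measure Ω) (α q : ℝ) (Y : Ω → ℝ) : EReal :=
  sSup {x : EReal | ∃ Z : Ω → ℝ, IsDensity P Z ∧ RenyiFinite P Z q ∧
    renyiEntropy P Z q ≤ Real.log (1 / (1 - α)) ∧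
    Integrable (fun ω => Y ω * Z ω) P ∧
    x = ((∫ ω, Y ω * Z ω ∂P : ℝ) : EReal)}

/-- The Average Value-at-Risk: the supremum of `E[Y Z]` over all densities
`Z ≤ 1/(1-α)` a.s. -/
def AVaR (P : Measure Ω) (α : ℝ) (Y : Ω → ℝ) : EReal :=
  sSup {x : EReal | ∃ Z : Ω → ℝ, IsDensity P Z ∧ (∀ᵐ ω ∂P, Z ω ≤ 1 / (1 - α)) ∧
    Integrable (fun ω => Y ω * Z ω) P ∧
    x = ((∫ ω, Y ω * Z ω ∂P : ℝ) : EReal)}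

/-- The Entropic Value-at-Risk of (primal) order `p`, with the Rényi-entropy
constraint of the Hölder-conjugate order `p' = p/(p-1)`; for `p = 1` it is the AV@R. -/
def EVaR (P : Measure Ω) (α p : ℝ) (Y : Ω → ℝ) : EReal :=
  if p = 1 then AVaR P α Y else EVaRd P α (p / (p - 1)) Y

/-!
Every density `Z` gives `E[|Y| Z] ≤ ‖Y‖_∞`, which is the upper bound. As `p ↑ 0` the conjugate
order `q = p/(p-1)` decreases to `0`, and a density with `Z ≥ m > 0` has
`H_q(Z) ≤ q log(1/m) / (1 - q) → 0`; since `log (1/(1-α)) > 0`, such a `Z` eventually meets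
the entropy constraint. The densities `ε + (1 - ε) 1_A / P(A)` with `A = {|Y| > v}` and
`v < ‖Y‖_∞` are bounded below by `ε` and make `E[|Y| Z]` as close to `‖Y‖_∞` as desired.
-/

open Topology

variable {P : Measure Ω} {X Z W : Ω → ℝ}

lemma isDensity_one [IsProbabilityMeasure P] : IsDensity P fun _ => 1 :=
  ⟨integrable_const 1, ae_of_all _ fun _ => zero_le_one, by simp⟩

lemma isDensity_indicator [IsFiniteMeasure P] {A : Set Ω} (hA : MeasurableSet A)
    (hPA : P A ≠ 0) : IsDensity P (A.indicator fun _ => (P.real A)⁻¹) := by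
  refine ⟨(integrable_const _).indicator hA,
    ae_of_all _ (Set.indicator_nonneg fun _ _ => by positivity), ?_⟩
  rw [integral_indicator_const _ hA, smul_eq_mul, mul_inv_cancel₀]
  exact (measureReal_ne_zero_iff).2 hPA

namespace IsDensity

lemma convex_comb (hZ : IsDensity P Z) (hW : IsDensity P W) {t : ℝ} (ht₀ : 0 ≤ t)
    (ht₁ : t ≤ 1) : IsDensity P fun ω => t * Z ω + (1 - t) * W ω := by
  obtain ⟨hZi, hZ0, hZ1⟩ := hZ
  obtain ⟨hWi, hW0, hW1⟩ := hW
  refine ⟨(hZi.const_mul t).add (hWi.const_mul (1 - t)), ?_, ?_⟩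
  · filter_upwards [hZ0, hW0] with ω hZω hWω
    have : 0 ≤ 1 - t := by linarith
    simp only [Pi.zero_apply] at hZω hWω ⊢
    positivity
  · rw [integral_add (hZi.const_mul t) (hWi.const_mul (1 - t)), integral_const_mul,
      integral_const_mul, hZ1, hW1]
    ring

lemma integrable_mul (hZ : IsDensity P Z) (hX : MemLp X ⊤ P) :
    Integrable (fun ω => X ω * Z ω) P :=
  hZ.1.mul_of_top_right hX

lemma integrable_rpow [IsFiniteMeasure P] (hZ : IsDensity P Z) {q : ℝ} (hq₀ : 0 < q)
    (hq₁ : q ≤ 1) : Integrable (fun ω => Z ω ^ q) P := by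
  have hLq : MemLp Z (ENNReal.ofReal q) P :=
    (memLp_one_iff_integrable.2 hZ.1).mono_exponent (by simpa using hq₁)
  refine (hLq.integrable_norm_rpow').congr ?_
  filter_upwards [hZ.2.1] with ω hω
  rw [ENNReal.toReal_ofReal hq₀.le, Real.norm_of_nonneg hω]

lemma integral_mul_le (hZ : IsDensity P Z) {M : ℝ} (hXM : ∀ᵐ ω ∂P, X ω ≤ M)
    (hXZ : Integrable (fun ω => X ω * Z ω) P) : ∫ ω, X ω * Z ω ∂P ≤ M :=
  calc ∫ ω, X ω * Z ω ∂P ≤ ∫ ω, M * Z ω ∂P := by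
        refine integral_mono_ae hXZ (hZ.1.const_mul M) ?_
        filter_upwards [hXM, hZ.2.1] with ω hXω hZω
        exact mul_le_mul_of_nonneg_right hXω hZω
    _ = M := by rw [integral_const_mul, hZ.2.2, mul_one]

end IsDensity

lemma renyiEntropy_le_of_le [IsProbabilityMeasure P] {q m : ℝ} (hq₀ : 0 < q) (hq₁ : q < 1)
    (hZq : Integrable (fun ω => Z ω ^ q) P) (hm : 0 < m) (hmZ : ∀ᵐ ω ∂P, m ≤ Z ω) :
    renyiEntropy P Z q ≤ (q - 1)⁻¹ * (q * log m) := by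
  have hmoment : m ^ q ≤ ∫ ω, Z ω ^ q ∂P :=
    calc m ^ q = ∫ _, m ^ q ∂P := by simp
      _ ≤ ∫ ω, Z ω ^ q ∂P := integral_mono_ae (integrable_const _) hZq <| by
          filter_upwards [hmZ] with ω hω using rpow_le_rpow hm.le hω hq₀.le
  rw [renyiEntropy, if_neg hq₀.ne', if_neg hq₁.ne]
  refine mul_le_mul_of_nonpos_left ?_ (inv_nonpos.2 (by linarith))
  rw [← log_rpow hm]
  exact log_le_log (by positivity) hmoment

lemma IsDensity.eventually_renyiEntropy_le [IsProbabilityMeasure P] (hZ : IsDensity P Z)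
    {m L : ℝ} (hm : 0 < m) (hmZ : ∀ᵐ ω ∂P, m ≤ Z ω) (hL : 0 < L) :
    ∀ᶠ q in 𝓝[>] 0, RenyiFinite P Z q ∧ renyiEntropy P Z q ≤ L := by
  have hbound : Tendsto (fun q : ℝ => (q - 1)⁻¹ * (q * log m)) (𝓝 0) (𝓝 0) := by
    have : ContinuousAt (fun q : ℝ => (q - 1)⁻¹ * (q * log m)) 0 := by
      fun_prop (disch := norm_num)
    simpa using this.tendsto
  filter_upwards [nhdsWithin_le_nhds (hbound.eventually (gt_mem_nhds hL)),
    Ioo_mem_nhdsGT one_pos] with q hqL ⟨hq₀, hq₁⟩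
  have hZq := hZ.integrable_rpow hq₀ hq₁.le
  refine ⟨⟨fun h => absurd h hq₁.ne, fun _ _ => hZq, fun h => absurd h hq₀.not_gt⟩, ?_⟩
  exact (renyiEntropy_le_of_le hq₀ hq₁ hZq hm hmZ).trans hqL.le

lemma integral_mul_le_EVaRd {α q : ℝ} (hZ : IsDensity P Z) (hZq : RenyiFinite P Z q)
    (hH : renyiEntropy P Z q ≤ log (1 / (1 - α))) (hXZ : Integrable (fun ω => X ω * Z ω) P) :
    ((∫ ω, X ω * Z ω ∂P : ℝ) : EReal) ≤ EVaRd P α q X :=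
  le_sSup ⟨Z, hZ, hZq, hH, hXZ, rfl⟩

lemma EVaRd_le_of_ae_le {α q M : ℝ} (hXM : ∀ᵐ ω ∂P, X ω ≤ M) : EVaRd P α q X ≤ M :=
  sSup_le <| by
    rintro x ⟨Z, hZ, -, -, hXZ, rfl⟩
    exact EReal.coe_le_coe_iff.2 (hZ.integral_mul_le hXM hXZ)

lemma tendsto_div_sub_one_nhdsLT_zero :
    Tendsto (fun p : ℝ => p / (p - 1)) (𝓝[<] 0) (𝓝[>] 0) := by
  refine tendsto_nhdsWithin_iff.2 ⟨?_, ?_⟩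
  · have : ContinuousAt (fun p : ℝ => p / (p - 1)) 0 := by fun_prop (disch := norm_num)
    simpa using this.tendsto.mono_left nhdsWithin_le_nhds
  · filter_upwards [self_mem_nhdsWithin] with p (hp : p < 0)
    exact div_pos_of_neg_of_neg hp (by linarith)

lemma IsDensity.eventually_integral_mul_le_EVaR [IsProbabilityMeasure P] {α m : ℝ}
    (hα : 0 < log (1 / (1 - α))) (hZ : IsDensity P Z) (hm : 0 < m) (hmZ : ∀ᵐ ω ∂P, m ≤ Z ω)
    (hX : MemLp X ⊤ P) :
    ∀ᶠ p in 𝓝[<] 0, ((∫ ω, X ω * Z ω ∂P : ℝ) : EReal) ≤ EVaR P α p X := by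
  filter_upwards [tendsto_div_sub_one_nhdsLT_zero.eventually
    (hZ.eventually_renyiEntropy_le hm hmZ hα), self_mem_nhdsWithin] with p ⟨hZq, hH⟩ hp
  rw [EVaR, if_neg (by linarith [show p < 0 from hp])]
  exact integral_mul_le_EVaRd hZ hZq hH (hZ.integrable_mul hX)

lemma isBoundedUnder_le_ae_of_memLp_top (hX : MemLp X ⊤ P) :
    IsBoundedUnder (· ≤ ·) (ae P) X := by
  have h := hX.eLpNorm_lt_top
  rw [eLpNorm_exponent_top, eLpNormEssSup_lt_top_iff_isBoundedUnder] at h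
  obtain ⟨C, hC⟩ := h
  refine ⟨C, ?_⟩
  rw [eventually_map] at hC ⊢
  filter_upwards [hC] with ω hω
  exact (le_abs_self _).trans (show ‖X ω‖₊ ≤ C from hω)

lemma exists_measurableSet_lt_of_lt_essSup [NeZero P] (hX : AEStronglyMeasurable X P)
    (hX₀ : 0 ≤ᵐ[P] X) {v : ℝ} (hv : v < essSup X P) :
    ∃ A, MeasurableSet A ∧ P A ≠ 0 ∧ ∀ᵐ ω ∂P, ω ∈ A → v < X ω := by
  have : (ae P).NeBot := ae_neBot.2 (NeZero.ne P)
  refine ⟨{ω | v < hX.mk X ω},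
    measurableSet_lt measurable_const hX.stronglyMeasurable_mk.measurable, fun hA => ?_, ?_⟩
  · have hXv : ∀ᵐ ω ∂P, X ω ≤ v := by
      filter_upwards [measure_eq_zero_iff_ae_notMem.1 hA, hX.ae_eq_mk] with ω hω hXω
      exact hXω ▸ not_lt.1 hω
    exact (essSup_le_of_ae_le v hXv (isCoboundedUnder_le_of_eventually_le _ hX₀)).not_gt hv
  · filter_upwards [hX.ae_eq_mk] with ω hXω hω
    exact hXω ▸ hω

lemma le_integral_mul_indicator [IsFiniteMeasure P] {A : Set Ω} (hA : MeasurableSet A)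
    (hPA : P A ≠ 0) (hX : MemLp X ⊤ P) {v : ℝ} (hvX : ∀ᵐ ω ∂P, ω ∈ A → v ≤ X ω) :
    v ≤ ∫ ω, X ω * A.indicator (fun _ => (P.real A)⁻¹) ω ∂P := by
  have hPA' : P.real A ≠ 0 := (measureReal_ne_zero_iff).2 hPA
  calc v = ∫ ω, A.indicator (fun _ => v * (P.real A)⁻¹) ω ∂P := by
        rw [integral_indicator_const _ hA, smul_eq_mul]
        field_simp
    _ ≤ ∫ ω, X ω * A.indicator (fun _ => (P.real A)⁻¹) ω ∂P := by
        refine integral_mono_ae ((integrable_const _).indicator hA)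
          ((isDensity_indicator hA hPA).integrable_mul hX) ?_
        filter_upwards [hvX] with ω hω
        by_cases hωA : ω ∈ A
        · simp only [Set.indicator_of_mem hωA]
          exact mul_le_mul_of_nonneg_right (hω hωA) (by positivity)
        · simp [Set.indicator_of_notMem hωA]

lemma exists_density_lt_integral_mul [IsProbabilityMeasure P] (hX : MemLp X ⊤ P)
    (hX₀ : 0 ≤ᵐ[P] X) {c : ℝ} (hc : c < essSup X P) :
    ∃ Z m, IsDensity P Z ∧ 0 < m ∧ (∀ᵐ ω ∂P, m ≤ Z ω) ∧ c < ∫ ω, X ω * Z ω ∂P := by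
  obtain ⟨v, hcv, hv⟩ := exists_between hc
  obtain ⟨A, hA, hPA, hvA⟩ := exists_measurableSet_lt_of_lt_essSup hX.1 hX₀ hv
  set W := A.indicator fun _ => (P.real A)⁻¹
  have hW : IsDensity P W := isDensity_indicator hA hPA
  have hvW : v ≤ ∫ ω, X ω * W ω ∂P :=
    le_integral_mul_indicator hA hPA hX (by filter_upwards [hvA] with ω h hω using (h hω).le)
  have hshrink : ∀ᶠ ε in 𝓝 (0 : ℝ), c < (1 - ε) * v := by
    have : ContinuousAt (fun ε : ℝ => (1 - ε) * v) 0 := by fun_prop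
    exact this.eventually (lt_mem_nhds (by simpa using hcv))
  obtain ⟨ε, hcε, hε₀, hε₁⟩ :=
    ((eventually_nhdsWithin_of_eventually_nhds hshrink).and (Ioo_mem_nhdsGT one_pos)).exists
  set Z := fun ω => ε * 1 + (1 - ε) * W ω
  have hZ : IsDensity P Z := isDensity_one.convex_comb hW hε₀.le hε₁.le
  refine ⟨Z, ε, hZ, hε₀, ?_, ?_⟩
  · filter_upwards [hW.2.1] with ω hω
    have : 0 ≤ (1 - ε) * W ω := mul_nonneg (by linarith) hω
    linarith
  calc c < (1 - ε) * v := hcε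
    _ ≤ (1 - ε) * ∫ ω, X ω * W ω ∂P := mul_le_mul_of_nonneg_left hvW (by linarith)
    _ = ∫ ω, (1 - ε) * (X ω * W ω) ∂P := (integral_const_mul _ _).symm
    _ ≤ ∫ ω, X ω * Z ω ∂P := by
        refine integral_mono_ae ((hW.integrable_mul hX).const_mul _) (hZ.integrable_mul hX) ?_
        filter_upwards [hX₀] with ω hω
        have : 0 ≤ ε * X ω := mul_nonneg hε₀.le hω
        simp only [Z]
        linarith

/-- `EVaR_α^p(|Y|) → ‖Y‖_∞` as `p ↑ 0`, for bounded `Y`. -/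
theorem evar_tendsto_esssup (P : Measure Ω) [IsProbabilityMeasure P]
    (α : ℝ) (hα : α ∈ Set.Ioo (0 : ℝ) 1)
    (Y : Ω → ℝ) (hY : MemLp Y ⊤ P) :
    Tendsto (fun p : ℝ => EVaR P α p (fun ω => |Y ω|)) (nhdsWithin 0 (Set.Iio 0))
      (nhds ((essSup (fun ω => |Y ω|) P : ℝ) : EReal)) := by
  have hX : MemLp (fun ω => |Y ω|) ⊤ P := hY.abs
  have hL : 0 < log (1 / (1 - α)) :=
    log_pos (one_lt_one_div (by linarith [hα.2]) (by linarith [hα.1]))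
  refine tendsto_order.2 ⟨fun b hb => ?_, fun b hb => ?_⟩
  · obtain ⟨c, hbc, hc⟩ := EReal.lt_iff_exists_real_btwn.1 hb
    obtain ⟨Z, m, hZ, hm, hmZ, hcZ⟩ := exists_density_lt_integral_mul hX
      (ae_of_all _ fun ω => abs_nonneg (Y ω)) (EReal.coe_lt_coe_iff.1 hc)
    filter_upwards [hZ.eventually_integral_mul_le_EVaR hL hm hmZ hX] with p hp
    exact hbc.trans ((EReal.coe_lt_coe_iff.2 hcZ).trans_le hp)
  · filter_upwards [self_mem_nhdsWithin] with p hp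
    rw [EVaR, if_neg (by linarith [show p < 0 from hp])]
    exact (EVaRd_le_of_ae_le (ae_le_essSup (isBoundedUnder_le_ae_of_memLp_top hX))).trans_lt hb

end
end

section
/- Let α ∈ (0,1), let p₁' < 0 < p₂' < 1 ≤ p₃' ≤ p₄' and set p_i = p_i'/(p_i' − 1) (the Hölder conjugates). Then for every essentially bounded random variable Y on (Ω, 𝓕, P): AVaR_α(Y) ≤ EVaR_α^{p₄}(Y) ≤ EVaR_α^{p₃}(Y) ≤ EVaR_α^∞(Y) ≤ EVaR_α^{p₂}(Y) ≤ EVaR_α^{p₁}(Y) = ess sup Y. -/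
open MeasureTheory Real Filter

noncomputable section

variable {Ω : Type*} [MeasurableSpace Ω]

/-!
For a density `Z`, the Rényi entropy of order `q` is nondecreasing in `q > 0`. For orders on the
same side of `1` this is the log-convexity of `q ↦ E[Z^q]`, i.e. the weighted AM-GM inequality
`E[Z^(θ + (1-θ)s)] ≤ E[Z^s]^(1-θ)` (recall `E[Z] = 1`); across `1` it is the Gibbs inequality
`(q - 1) E[Z log Z] ≤ log E[Z^q]`. So the feasible sets of the suprema defining EVaR shrink as the
order grows, and every density bounded by `1/(1-α)` is feasible for all orders `≥ 1`. For a
negative order every density bounded away from `0` has nonpositive Rényi entropy, by the tangent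
line bound `z^q ≥ 1 + q (z - 1)`. Mixing a little of the constant density into `𝟙_A / P(A)`,
`A = {Y > b}` with `b < ess sup Y`, then gives feasible densities with `E[Y Z]` close to
`ess sup Y`.
-/

open Set Topology

section

variable {P : Measure Ω} {Z Y : Ω → ℝ} {α q c δ : ℝ} {A : Set Ω}

lemma sub_one_mul_mul_log_le {z m : ℝ} (hz : 0 ≤ z) (hm : 0 < m) :
    (q - 1) * (z * log z) ≤ z * log m + z ^ q / m - z := by
  rcases hz.eq_or_lt with rfl | hz
  · simpa using div_nonneg (rpow_nonneg le_rfl q) hm.le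
  have hpow : 0 < z ^ (q - 1) / m := div_pos (rpow_pos_of_pos hz _) hm
  have hlog := log_le_sub_one_of_pos hpow
  rw [log_div (rpow_pos_of_pos hz _).ne' hm.ne', log_rpow hz, rpow_sub_one hz.ne'] at hlog
  have := mul_le_mul_of_nonneg_left hlog hz.le
  have hzq : z * (z ^ q / z / m - 1) = z ^ q / m - z := by field_simp
  rw [hzq] at this
  linarith

lemma rpow_interpolate_le {z m θ s : ℝ} (hz : 0 ≤ z) (hm : 0 < m) (hθ0 : 0 < θ)
    (hθ1 : θ ≤ 1) (hs : 0 ≤ s) :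
    z ^ (θ + (1 - θ) * s) ≤ m ^ (1 - θ) * (θ * z + (1 - θ) * (z ^ s / m)) := by
  have hexp : θ + (1 - θ) * s ≠ 0 := by nlinarith
  have hsplit : z ^ (θ + (1 - θ) * s) = m ^ (1 - θ) * (z ^ θ * (z ^ s / m) ^ (1 - θ)) := by
    rw [div_rpow (rpow_nonneg hz s) hm.le, ← rpow_mul hz, rpow_add' hz hexp, mul_comm s]
    field_simp
  rw [hsplit]
  gcongr
  exact geom_mean_le_arith_mean2_weighted hθ0.le (by linarith) hz
    (div_nonneg (rpow_nonneg hz s) hm.le) (by ring)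

lemma one_add_mul_sub_one_le_rpow {z : ℝ} (hz : 0 < z) (hq : q ≤ 0) :
    1 + q * (z - 1) ≤ z ^ q := by
  have h1 : q * (z - 1) ≤ q * log z := mul_le_mul_of_nonpos_left (log_le_sub_one_of_pos hz) hq
  have h2 := add_one_le_exp (q * log z)
  rw [rpow_def_of_pos hz, mul_comm (log z)]
  linarith

def renyiBall (P : Measure Ω) (q c : ℝ) : Set (Ω → ℝ) :=
  {Z | IsDensity P Z ∧ RenyiFinite P Z q ∧ renyiEntropy P Z q ≤ c}

lemma renyiEntropy_one : renyiEntropy P Z 1 = ∫ ω, Z ω * log (Z ω) ∂P := by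
  simp [renyiEntropy]

lemma renyiEntropy_of_ne (h0 : q ≠ 0) (h1 : q ≠ 1) :
    renyiEntropy P Z q = (q - 1)⁻¹ * log (∫ ω, Z ω ^ q ∂P) := by
  simp [renyiEntropy, h0, h1]

lemma renyiFinite_one_iff :
    RenyiFinite P Z 1 ↔ Integrable (fun ω => Z ω * log (Z ω)) P := by
  simp [RenyiFinite]

lemma renyiFinite_iff_of_pos (h0 : 0 < q) (h1 : q ≠ 1) :
    RenyiFinite P Z q ↔ Integrable (fun ω => Z ω ^ q) P := by
  simp [RenyiFinite, h0.ne', h1, h0.not_gt]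

lemma IsDensity.ae_nonneg (hZ : IsDensity P Z) : ∀ᵐ ω ∂P, 0 ≤ Z ω :=
  hZ.2.1

lemma IsDensity.integral_rpow_pos (hZ : IsDensity P Z)
    (hint : Integrable (fun ω => Z ω ^ q) P) : 0 < ∫ ω, Z ω ^ q ∂P := by
  have hnn : 0 ≤ᵐ[P] fun ω => Z ω ^ q := by
    filter_upwards [hZ.ae_nonneg] with ω h using rpow_nonneg h q
  refine (integral_nonneg_of_ae hnn).lt_of_ne fun h => ?_
  -- `Z ^ q` vanishes only where `Z` does, and `Z` cannot vanish a.e. since `∫ Z = 1`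
  have hZ0 : Z =ᵐ[P] 0 := by
    filter_upwards [(integral_eq_zero_iff_of_nonneg_ae hnn hint).1 h.symm, hZ.ae_nonneg]
      with ω h1 h2
    by_contra hne
    exact (rpow_pos_of_pos (h2.lt_of_ne' hne) q).ne' h1
  simpa [integral_congr_ae hZ0] using hZ.2.2

lemma IsDensity.sub_one_mul_integral_mul_log_le (hZ : IsDensity P Z)
    (hq : Integrable (fun ω => Z ω ^ q) P) (hlog : Integrable (fun ω => Z ω * log (Z ω)) P) :
    (q - 1) * ∫ ω, Z ω * log (Z ω) ∂P ≤ log (∫ ω, Z ω ^ q ∂P) := by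
  set m := ∫ ω, Z ω ^ q ∂P
  have hm : 0 < m := hZ.integral_rpow_pos hq
  have hsum : Integrable (fun ω => Z ω * log m + Z ω ^ q / m) P :=
    (hZ.1.mul_const _).add (hq.div_const _)
  calc (q - 1) * ∫ ω, Z ω * log (Z ω) ∂P
      = ∫ ω, (q - 1) * (Z ω * log (Z ω)) ∂P := (integral_const_mul _ _).symm
    _ ≤ ∫ ω, (Z ω * log m + Z ω ^ q / m - Z ω) ∂P := by
        refine integral_mono_ae (hlog.const_mul _) (hsum.sub hZ.1) ?_
        filter_upwards [hZ.ae_nonneg] with ω hz using sub_one_mul_mul_log_le hz hm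
    _ = log m := by
        rw [integral_sub hsum hZ.1, integral_add (hZ.1.mul_const _) (hq.div_const _),
          integral_mul_const, integral_div, hZ.2.2]
        field_simp
        ring

lemma IsDensity.integrable_rpow_interpolate {θ s : ℝ} (hZ : IsDensity P Z) (hθ0 : 0 < θ)
    (hθ1 : θ ≤ 1) (hs : 0 ≤ s) (hint : Integrable (fun ω => Z ω ^ s) P) :
    Integrable (fun ω => Z ω ^ (θ + (1 - θ) * s)) P := by
  set m := ∫ ω, Z ω ^ s ∂P
  have hm : 0 < m := hZ.integral_rpow_pos hint
  refine (((hZ.1.const_mul θ).add ((hint.div_const m).const_mul (1 - θ))).const_mul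
    (m ^ (1 - θ))).mono' (hZ.1.aemeasurable.pow_const _).aestronglyMeasurable ?_
  filter_upwards [hZ.ae_nonneg] with ω hz
  rw [norm_of_nonneg (rpow_nonneg hz _)]
  exact rpow_interpolate_le hz hm hθ0 hθ1 hs

lemma IsDensity.log_integral_rpow_interpolate_le {θ s : ℝ} (hZ : IsDensity P Z) (hθ0 : 0 < θ)
    (hθ1 : θ ≤ 1) (hs : 0 ≤ s) (hint : Integrable (fun ω => Z ω ^ s) P) :
    log (∫ ω, Z ω ^ (θ + (1 - θ) * s) ∂P) ≤ (1 - θ) * log (∫ ω, Z ω ^ s ∂P) := by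
  set m := ∫ ω, Z ω ^ s ∂P
  have hm : 0 < m := hZ.integral_rpow_pos hint
  have hint' := hZ.integrable_rpow_interpolate hθ0 hθ1 hs hint
  have hg : Integrable (fun ω => m ^ (1 - θ) * (θ * Z ω + (1 - θ) * (Z ω ^ s / m))) P :=
    ((hZ.1.const_mul _).add ((hint.div_const _).const_mul _)).const_mul _
  have hle : ∫ ω, Z ω ^ (θ + (1 - θ) * s) ∂P ≤ m ^ (1 - θ) := by
    calc ∫ ω, Z ω ^ (θ + (1 - θ) * s) ∂P
        ≤ ∫ ω, m ^ (1 - θ) * (θ * Z ω + (1 - θ) * (Z ω ^ s / m)) ∂P := by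
          refine integral_mono_ae hint' hg ?_
          filter_upwards [hZ.ae_nonneg] with ω hz using rpow_interpolate_le hz hm hθ0 hθ1 hs
      _ = m ^ (1 - θ) := by
          rw [integral_const_mul, integral_add (hZ.1.const_mul _) ((hint.div_const _).const_mul _),
            integral_const_mul, integral_const_mul, integral_div, hZ.2.2]
          field_simp
          ring
  rw [← log_rpow hm]
  exact log_le_log (hZ.integral_rpow_pos hint') hle

lemma IsDensity.integrable_rpow_of_le_one [IsFiniteMeasure P] (hZ : IsDensity P Z) (h0 : 0 < q)
    (h1 : q ≤ 1) : Integrable (fun ω => Z ω ^ q) P := by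
  simpa using hZ.integrable_rpow_interpolate h0 h1 le_rfl (by simp)

lemma IsDensity.integrable_mul_log [IsFiniteMeasure P] (hZ : IsDensity P Z) (hq : 1 < q)
    (hint : Integrable (fun ω => Z ω ^ q) P) :
    Integrable (fun ω => Z ω * log (Z ω)) P := by
  refine integrable_of_le_of_le (g₁ := fun ω => Z ω - 1) (g₂ := fun ω => Z ω ^ q / (q - 1))
    (continuous_mul_log.comp_aestronglyMeasurable hZ.1.aestronglyMeasurable) ?_ ?_
    (hZ.1.sub (integrable_const 1)) (hint.div_const _)
  · filter_upwards [hZ.ae_nonneg] with ω hz using self_sub_one_le_mul_log hz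
  · filter_upwards [hZ.ae_nonneg] with ω hz
    have := sub_one_mul_mul_log_le (q := q) hz one_pos
    simp only [log_one, mul_zero, zero_add, div_one] at this
    rw [le_div_iff₀ (by linarith), mul_comm]
    linarith [rpow_nonneg hz q]

lemma renyiBall_subset_renyiBall_one [IsFiniteMeasure P] (hq : 1 < q) :
    renyiBall P q c ⊆ renyiBall P 1 c := by
  rintro Z ⟨hZ, hfin, hent⟩
  rw [renyiFinite_iff_of_pos (by linarith) hq.ne'] at hfin
  rw [renyiEntropy_of_ne (by linarith) hq.ne'] at hent
  have hlog := hZ.integrable_mul_log hq hfin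
  refine ⟨hZ, renyiFinite_one_iff.2 hlog, ?_⟩
  rw [renyiEntropy_one]
  refine le_trans ?_ hent
  rw [inv_mul_eq_div, le_div_iff₀ (by linarith), mul_comm]
  exact hZ.sub_one_mul_integral_mul_log_le hfin hlog

lemma renyiBall_one_subset [IsFiniteMeasure P] (h0 : 0 < q) (h1 : q < 1) :
    renyiBall P 1 c ⊆ renyiBall P q c := by
  rintro Z ⟨hZ, hfin, hent⟩
  rw [renyiFinite_one_iff] at hfin
  rw [renyiEntropy_one] at hent
  have hint := hZ.integrable_rpow_of_le_one h0 h1.le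
  refine ⟨hZ, (renyiFinite_iff_of_pos h0 h1.ne).2 hint, ?_⟩
  rw [renyiEntropy_of_ne h0.ne' h1.ne]
  refine le_trans ?_ hent
  rw [inv_mul_eq_div, div_le_iff_of_neg (by linarith), mul_comm]
  exact hZ.sub_one_mul_integral_mul_log_le hint hfin

lemma renyiBall_subset_of_one_lt {q₁ q₂ : ℝ} (h1 : 1 < q₁) (h12 : q₁ < q₂) :
    renyiBall P q₂ c ⊆ renyiBall P q₁ c := by
  rintro Z ⟨hZ, hfin, hent⟩
  rw [renyiFinite_iff_of_pos (by linarith) (by linarith)] at hfin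
  rw [renyiEntropy_of_ne (by linarith) (by linarith)] at hent
  have hq₁ : q₁ - 1 ≠ 0 := by linarith
  have hq₂ : q₂ - 1 ≠ 0 := by linarith
  set θ := (q₂ - q₁) / (q₂ - 1)
  have hθ : θ + (1 - θ) * q₂ = q₁ := by simp only [θ]; field_simp; ring
  have hθ0 : 0 < θ := div_pos (by linarith) (by linarith)
  have hθ1 : θ ≤ 1 := (div_le_one (by linarith)).2 (by linarith)
  have hint := hθ ▸ hZ.integrable_rpow_interpolate hθ0 hθ1 (by linarith) hfin
  have hlog := hθ ▸ hZ.log_integral_rpow_interpolate_le hθ0 hθ1 (by linarith) hfin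
  refine ⟨hZ, (renyiFinite_iff_of_pos (by linarith) h1.ne').2 hint, ?_⟩
  rw [renyiEntropy_of_ne (by linarith) h1.ne']
  calc (q₁ - 1)⁻¹ * log (∫ ω, Z ω ^ q₁ ∂P)
      ≤ (q₁ - 1)⁻¹ * ((1 - θ) * log (∫ ω, Z ω ^ q₂ ∂P)) :=
        mul_le_mul_of_nonneg_left hlog (inv_nonneg.2 (by linarith))
    _ = (q₂ - 1)⁻¹ * log (∫ ω, Z ω ^ q₂ ∂P) := by
        simp only [θ]
        field_simp
        ring
    _ ≤ c := hent

lemma renyiBall_subset_of_lt_one [IsFiniteMeasure P] {q₁ q₂ : ℝ} (h0 : 0 < q₁) (h12 : q₁ < q₂)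
    (h1 : q₂ < 1) :
    renyiBall P q₂ c ⊆ renyiBall P q₁ c := by
  rintro Z ⟨hZ, hfin, hent⟩
  rw [renyiFinite_iff_of_pos (by linarith) h1.ne] at hfin
  rw [renyiEntropy_of_ne (by linarith) h1.ne] at hent
  have hq₁ : q₁ - 1 ≠ 0 := by linarith
  have hq₂ : q₂ - 1 ≠ 0 := by linarith
  have hint := hZ.integrable_rpow_of_le_one h0 (by linarith)
  set θ := (q₁ - q₂) / (q₁ - 1)
  have hθ : θ + (1 - θ) * q₁ = q₂ := by simp only [θ]; field_simp; ring
  have hθ0 : 0 < θ := div_pos_of_neg_of_neg (by linarith) (by linarith)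
  have hθ1 : θ ≤ 1 := (div_le_one_of_neg (by linarith)).2 (by linarith)
  have hlog := hθ ▸ hZ.log_integral_rpow_interpolate_le hθ0 hθ1 h0.le hint
  refine ⟨hZ, (renyiFinite_iff_of_pos h0 (by linarith)).2 hint, ?_⟩
  rw [renyiEntropy_of_ne h0.ne' (by linarith)]
  calc (q₁ - 1)⁻¹ * log (∫ ω, Z ω ^ q₁ ∂P)
      = (q₂ - 1)⁻¹ * ((1 - θ) * log (∫ ω, Z ω ^ q₁ ∂P)) := by
        simp only [θ]
        field_simp
        ring
    _ ≤ (q₂ - 1)⁻¹ * log (∫ ω, Z ω ^ q₂ ∂P) :=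
        mul_le_mul_of_nonpos_left hlog (inv_nonpos.2 (by linarith))
    _ ≤ c := hent

theorem renyiBall_antitoneOn [IsFiniteMeasure P] (c : ℝ) :
    AntitoneOn (fun q => renyiBall P q c) (Ioi 0) := by
  intro q₁ h0 q₂ _ h12
  rcases h12.eq_or_lt with rfl | h12
  · exact le_rfl
  rcases lt_trichotomy q₁ 1 with h1 | rfl | h1
  · rcases lt_trichotomy q₂ 1 with h2 | rfl | h2
    · exact renyiBall_subset_of_lt_one h0 h12 h2
    · exact renyiBall_one_subset h0 h1
    · exact (renyiBall_subset_renyiBall_one h2).trans (renyiBall_one_subset h0 h1)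
  · exact renyiBall_subset_renyiBall_one h12
  · exact renyiBall_subset_of_one_lt h1 h12

lemma mem_renyiBall_of_ae_le_of_one_lt (hZ : IsDensity P Z) (hc : 0 < c)
    (hZc : ∀ᵐ ω ∂P, Z ω ≤ c) (hq : 1 < q) : Z ∈ renyiBall P q (log c) := by
  have hle : ∀ᵐ ω ∂P, Z ω ^ q ≤ c ^ (q - 1) * Z ω := by
    filter_upwards [hZ.ae_nonneg, hZc] with ω hz hzc
    rcases hz.eq_or_lt with h | h
    · simp [← h, zero_rpow (by linarith : q ≠ 0)]
    calc Z ω ^ q = Z ω ^ (q - 1) * Z ω := by rw [rpow_sub_one h.ne', div_mul_cancel₀ _ h.ne']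
      _ ≤ c ^ (q - 1) * Z ω := by gcongr
  have hint : Integrable (fun ω => Z ω ^ q) P := by
    refine (hZ.1.const_mul (c ^ (q - 1))).mono'
      (hZ.1.aemeasurable.pow_const _).aestronglyMeasurable ?_
    filter_upwards [hle, hZ.ae_nonneg] with ω h hz
    rwa [norm_of_nonneg (rpow_nonneg hz _)]
  have hmom : ∫ ω, Z ω ^ q ∂P ≤ c ^ (q - 1) := by
    simpa [integral_const_mul, hZ.2.2] using integral_mono_ae hint (hZ.1.const_mul _) hle
  refine ⟨hZ, (renyiFinite_iff_of_pos (by linarith) hq.ne').2 hint, ?_⟩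
  rw [renyiEntropy_of_ne (by linarith) hq.ne', inv_mul_le_iff₀ (by linarith), ← log_rpow hc]
  exact log_le_log (hZ.integral_rpow_pos hint) hmom

lemma mem_renyiBall_of_ae_le [IsFiniteMeasure P] (hZ : IsDensity P Z) (hc : 0 < c)
    (hZc : ∀ᵐ ω ∂P, Z ω ≤ c) (hq : 1 ≤ q) : Z ∈ renyiBall P q (log c) := by
  rcases hq.eq_or_lt with rfl | hq
  · exact renyiBall_antitoneOn _ (mem_Ioi.2 one_pos) (mem_Ioi.2 two_pos) one_le_two
      (mem_renyiBall_of_ae_le_of_one_lt hZ hc hZc one_lt_two)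
  · exact mem_renyiBall_of_ae_le_of_one_lt hZ hc hZc hq

lemma IsDensity.one_le_integral_rpow_of_nonpos [IsProbabilityMeasure P] (hZ : IsDensity P Z)
    (hq : q ≤ 0) (hpos : ∀ᵐ ω ∂P, 0 < Z ω) (hint : Integrable (fun ω => Z ω ^ q) P) :
    1 ≤ ∫ ω, Z ω ^ q ∂P := by
  have hlin : Integrable (fun ω => (1 - q) + q * Z ω) P :=
    (integrable_const _).add (hZ.1.const_mul q)
  calc (1 : ℝ) = ∫ ω, (1 - q) + q * Z ω ∂P := by
        rw [integral_add (integrable_const _) (hZ.1.const_mul q), integral_const_mul, hZ.2.2]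
        simp
    _ ≤ ∫ ω, Z ω ^ q ∂P := by
        refine integral_mono_ae hlin hint ?_
        filter_upwards [hpos] with ω hz
        linarith [one_add_mul_sub_one_le_rpow hz hq]

lemma mem_renyiBall_of_neg [IsProbabilityMeasure P] (hZ : IsDensity P Z) (hq : q < 0)
    (hc : 0 ≤ c) (hδ : 0 < δ) (hZδ : ∀ᵐ ω ∂P, δ ≤ Z ω) : Z ∈ renyiBall P q c := by
  have hpos : ∀ᵐ ω ∂P, 0 < Z ω := by filter_upwards [hZδ] with ω h using hδ.trans_le h
  have hint : Integrable (fun ω => Z ω ^ q) P := by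
    refine (integrable_const (δ ^ q)).mono' (hZ.1.aemeasurable.pow_const _).aestronglyMeasurable ?_
    filter_upwards [hZδ, hpos] with ω h hz
    rw [norm_of_nonneg (rpow_nonneg hz.le _)]
    exact rpow_le_rpow_of_nonpos hδ h hq.le
  refine ⟨hZ, ⟨fun h => absurd h (by linarith), fun _ _ => hint, fun _ => hpos⟩, ?_⟩
  rw [renyiEntropy_of_ne hq.ne (by linarith)]
  exact (mul_nonpos_of_nonpos_of_nonneg (inv_nonpos.2 (by linarith))
    (log_nonneg (hZ.one_le_integral_rpow_of_nonpos hq.le hpos hint))).trans hc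

def mixDensity (P : Measure Ω) (A : Set Ω) (δ : ℝ) : Ω → ℝ :=
  fun ω => A.indicator (fun _ => (1 - δ) / P.real A) ω + δ

lemma le_mixDensity (hδ : δ ≤ 1) (ω : Ω) : δ ≤ mixDensity P A δ ω := by
  have : 0 ≤ A.indicator (fun _ => (1 - δ) / P.real A) ω :=
    indicator_nonneg (fun _ _ => div_nonneg (by linarith) measureReal_nonneg) ω
  simp only [mixDensity]
  linarith

lemma isDensity_mixDensity [IsProbabilityMeasure P] (hA : MeasurableSet A) (hPA : P A ≠ 0)
    (hδ0 : 0 ≤ δ) (hδ1 : δ ≤ 1) : IsDensity P (mixDensity P A δ) := by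
  have hind : Integrable (A.indicator fun _ => (1 - δ) / P.real A) P :=
    (integrable_const _).indicator hA
  refine ⟨hind.add (integrable_const δ), ?_, ?_⟩
  · exact Eventually.of_forall fun ω => hδ0.trans (le_mixDensity hδ1 ω)
  · have : P.real A ≠ 0 := (measureReal_ne_zero_iff).2 hPA
    simp only [mixDensity]
    rw [integral_add hind (integrable_const δ), integral_indicator_const _ hA, integral_const,
      probReal_univ, smul_eq_mul, smul_eq_mul, one_mul]
    field_simp
    ring

lemma mul_mixDensity :
    (fun ω => Y ω * mixDensity P A δ ω) =
      fun ω => A.indicator (fun ω => (1 - δ) / P.real A * Y ω) ω + δ * Y ω := by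
  ext ω
  by_cases h : ω ∈ A <;> simp [mixDensity, h] <;> ring

lemma integral_mul_mixDensity (hA : MeasurableSet A) (hY : Integrable Y P) :
    Integrable (fun ω => Y ω * mixDensity P A δ ω) P ∧
      ∫ ω, Y ω * mixDensity P A δ ω ∂P =
        (1 - δ) / P.real A * ∫ ω in A, Y ω ∂P + δ * ∫ ω, Y ω ∂P := by
  have hind : Integrable (A.indicator fun ω => (1 - δ) / P.real A * Y ω) P :=
    (hY.const_mul _).indicator hA
  rw [mul_mixDensity]
  refine ⟨hind.add (hY.const_mul δ), ?_⟩
  rw [integral_add hind (hY.const_mul δ), integral_indicator hA, integral_const_mul,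
    integral_const_mul]

lemma integral_mul_le_essSup (hY : IsBoundedUnder (· ≤ ·) (ae P) Y) (hZ : IsDensity P Z)
    (hYZ : Integrable (fun ω => Y ω * Z ω) P) : ∫ ω, Y ω * Z ω ∂P ≤ essSup Y P := by
  have hle : ∀ᵐ ω ∂P, Y ω * Z ω ≤ essSup Y P * Z ω := by
    filter_upwards [ae_le_essSup hY, hZ.ae_nonneg] with ω h hz
    exact mul_le_mul_of_nonneg_right h hz
  simpa [integral_const_mul, hZ.2.2] using integral_mono_ae hYZ (hZ.1.const_mul _) hle

lemma MeasureTheory.MemLp.isBoundedUnder_le (hY : MemLp Y ⊤ P) :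
    IsBoundedUnder (· ≤ ·) (ae P) Y :=
  isBoundedUnder_of_eventually_le <| (ae_le_lpNorm_exponent_top hY).mono fun _ h =>
    (le_abs_self _).trans h

lemma MeasureTheory.MemLp.isCoboundedUnder_le [NeZero P] (hY : MemLp Y ⊤ P) :
    IsCoboundedUnder (· ≤ ·) (ae P) Y :=
  isCoboundedUnder_le_of_eventually_le _ <| (ae_le_lpNorm_exponent_top hY).mono fun _ h =>
    (neg_le_neg h).trans (neg_abs_le _)

lemma exists_setIntegral_ge_of_lt_essSup [IsProbabilityMeasure P] (hY : MemLp Y ⊤ P) {b : ℝ}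
    (hb : b < essSup Y P) :
    ∃ A, MeasurableSet A ∧ P A ≠ 0 ∧ b * P.real A ≤ ∫ ω in A, Y ω ∂P := by
  set Y' := hY.1.mk Y
  have hYY' : Y =ᵐ[P] Y' := hY.1.ae_eq_mk
  have hA : MeasurableSet {ω | b < Y' ω} :=
    measurableSet_lt measurable_const hY.1.stronglyMeasurable_mk.measurable
  have hfreq : ∃ᵐ ω ∂P, b < Y' ω :=
    (frequently_lt_of_lt_limsup hY.isCoboundedUnder_le hb).mp
      (hYY'.mono fun _ h hlt => h ▸ hlt)
  refine ⟨_, hA, frequently_ae_iff.1 hfreq, ?_⟩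
  rw [setIntegral_congr_ae hA (hYY'.mono fun _ h _ => h), mul_comm]
  exact setIntegral_ge_of_const_le hA (measure_ne_top _ _) (fun _ h => h.le)
    ((hY.integrable le_top).congr hYY').integrableOn

lemma le_EVaRd (hZ : Z ∈ renyiBall P q (log (1 / (1 - α))))
    (hYZ : Integrable (fun ω => Y ω * Z ω) P) :
    ((∫ ω, Y ω * Z ω ∂P : ℝ) : EReal) ≤ EVaRd P α q Y :=
  le_sSup ⟨Z, hZ.1, hZ.2.1, hZ.2.2, hYZ, rfl⟩

lemma EVaRd_le_EVaRd_of_subset {q₁ q₂ : ℝ}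
    (h : renyiBall P q₂ (log (1 / (1 - α))) ⊆ renyiBall P q₁ (log (1 / (1 - α)))) :
    EVaRd P α q₂ Y ≤ EVaRd P α q₁ Y :=
  sSup_le_sSup fun _ ⟨Z, hZ, hfin, hent, hYZ, hx⟩ =>
    have hZ' := h ⟨hZ, hfin, hent⟩
    ⟨Z, hZ'.1, hZ'.2.1, hZ'.2.2, hYZ, hx⟩

theorem EVaRd_antitoneOn [IsFiniteMeasure P] :
    AntitoneOn (fun q => EVaRd P α q Y) (Ioi 0) :=
  fun _ h₁ _ h₂ h12 => EVaRd_le_EVaRd_of_subset (renyiBall_antitoneOn _ h₁ h₂ h12)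

lemma AVaR_le_EVaRd [IsFiniteMeasure P] (hα : α < 1) (hq : 1 ≤ q) :
    AVaR P α Y ≤ EVaRd P α q Y :=
  sSup_le_sSup fun _ ⟨Z, hZ, hZc, hYZ, hx⟩ =>
    have hZ' := mem_renyiBall_of_ae_le hZ (one_div_pos.2 (sub_pos.2 hα)) hZc hq
    ⟨Z, hZ, hZ'.2.1, hZ'.2.2, hYZ, hx⟩

lemma EVaRd_le_essSup (hY : IsBoundedUnder (· ≤ ·) (ae P) Y) :
    EVaRd P α q Y ≤ essSup Y P :=
  sSup_le fun _ ⟨_, hZ, _, _, hYZ, hx⟩ =>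
    hx ▸ EReal.coe_le_coe_iff.2 (integral_mul_le_essSup hY hZ hYZ)

lemma essSup_le_EVaRd_of_neg [IsProbabilityMeasure P] (hα₀ : 0 ≤ α) (hα₁ : α < 1)
    (hq : q < 0) (hY : MemLp Y ⊤ P) : ((essSup Y P : ℝ) : EReal) ≤ EVaRd P α q Y := by
  refine EReal.ge_of_forall_gt_iff_ge.1 fun r hr => ?_
  obtain ⟨b, hrb, hb⟩ := exists_between (EReal.coe_lt_coe_iff.1 hr)
  obtain ⟨A, hA, hPA, hAb⟩ := exists_setIntegral_ge_of_lt_essSup hY hb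
  have hPA' : P.real A ≠ 0 := (measureReal_ne_zero_iff).2 hPA
  set m := ∫ ω, Y ω ∂P
  -- `(1 - δ) b + δ E[Y]` bounds `E[Y · mixDensity P A δ]` from below and tends to `b > r`
  have hlim : Tendsto (fun δ : ℝ => (1 - δ) * b + δ * m) (𝓝 0) (𝓝 b) := by
    simpa using (by fun_prop : Continuous fun δ : ℝ => (1 - δ) * b + δ * m).tendsto 0
  have hsmall : ∀ᶠ δ in 𝓝[>] 0, (r < (1 - δ) * b + δ * m ∧ δ < 1) ∧ 0 < δ :=
    (((hlim.eventually (lt_mem_nhds hrb)).and (eventually_lt_nhds one_pos)).filter_mono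
      nhdsWithin_le_nhds).and eventually_mem_nhdsWithin
  obtain ⟨δ, ⟨hr, hδ1⟩, hδ0⟩ := hsmall.exists
  obtain ⟨hYZ, hint⟩ := integral_mul_mixDensity (δ := δ) hA (hY.integrable le_top)
  have hmem : mixDensity P A δ ∈ renyiBall P q (log (1 / (1 - α))) :=
    mem_renyiBall_of_neg (isDensity_mixDensity hA hPA hδ0.le hδ1.le) hq
      (log_nonneg ((le_div_iff₀ (by linarith)).2 (by linarith))) hδ0
      (Eventually.of_forall (le_mixDensity hδ1.le))
  refine le_trans ?_ (le_EVaRd hmem hYZ)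
  rw [EReal.coe_le_coe_iff, hint]
  calc r ≤ (1 - δ) * b + δ * m := hr.le
    _ = (1 - δ) / P.real A * (b * P.real A) + δ * m := by field_simp
    _ ≤ (1 - δ) / P.real A * ∫ ω in A, Y ω ∂P + δ * m := by gcongr

end

/-- `EVaRd P α q` is `EVaR_α^p` at the conjugate order `q = p'`; the order `q = 1` is
`EVaR_α^∞`. -/
theorem evar_monotone (P : Measure Ω) [IsProbabilityMeasure P]
    (α : ℝ) (hα : α ∈ Set.Ioo (0 : ℝ) 1)
    (p₁' p₂' p₃' p₄' : ℝ) (h₁ : p₁' < 0) (h₂ : 0 < p₂') (h₃ : p₂' < 1)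
    (h₄ : 1 ≤ p₃') (h₅ : p₃' ≤ p₄')
    (Y : Ω → ℝ) (hY : MemLp Y ⊤ P) :
    AVaR P α Y ≤ EVaRd P α p₄' Y ∧
    EVaRd P α p₄' Y ≤ EVaRd P α p₃' Y ∧
    EVaRd P α p₃' Y ≤ EVaRd P α 1 Y ∧
    EVaRd P α 1 Y ≤ EVaRd P α p₂' Y ∧
    EVaRd P α p₂' Y ≤ EVaRd P α p₁' Y ∧
    EVaRd P α p₁' Y = ((essSup Y P : ℝ) : EReal) := by
  obtain ⟨hα₀, hα₁⟩ := hα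
  have hanti : AntitoneOn (fun q => EVaRd P α q Y) (Ioi 0) := EVaRd_antitoneOn
  have hp₃ : p₃' ∈ Ioi 0 := mem_Ioi.2 (by linarith)
  have hess : EVaRd P α p₁' Y = essSup Y P :=
    (EVaRd_le_essSup hY.isBoundedUnder_le).antisymm (essSup_le_EVaRd_of_neg hα₀.le hα₁ h₁ hY)
  exact ⟨AVaR_le_EVaRd hα₁ (h₄.trans h₅), hanti hp₃ (mem_Ioi.2 (by linarith)) h₅,
    hanti (mem_Ioi.2 one_pos) hp₃ h₄, hanti (mem_Ioi.2 h₂) (mem_Ioi.2 one_pos) h₃.le,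
    hess ▸ EVaRd_le_essSup hY.isBoundedUnder_le, hess⟩

end
end

section
/- Let α ∈ (0,1) and let either p > 1 or p < 0, with p' = p/(p-1). Then the Entropic Value-at-Risk has the alternative dual representation EVaR_α^p(Y) = sup{ E[YZ] : Z ≥ 0 a.s., E[Z] = 1, ‖Z‖*_{α,p'} ≤ 1 } for Y ∈ L^p(P) (for p > 1), respectively Y ∈ L^∞(P) (for p < 0). -/
open MeasureTheory Real Filter

noncomputable section

variable {Ω : Type*} [MeasurableSpace Ω]

/-- Membership in the domain of `EVaR_α^p`: `L^p` for `p > 1`, `L^∞` for `p < 0`. -/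
def MemDom (P : Measure Ω) (p : ℝ) (Y : Ω → ℝ) : Prop :=
  if 1 < p then MemLp Y (ENNReal.ofReal p) P else MemLp Y ⊤ P

/-- The dual norm of `Y ↦ EVaR_α^p(|Y|)`, the supremum being taken over `Y` in the
domain of `EVaR_α^p`. -/
def dualNorm (P : Measure Ω) (α p : ℝ) (Z : Ω → ℝ) : EReal :=
  sSup {x : EReal | ∃ Y : Ω → ℝ, MemDom P p Y ∧
    EVaR P α p (fun ω => |Y ω|) ≤ (1 : EReal) ∧
    Integrable (fun ω => Y ω * Z ω) P ∧
    x = ((∫ ω, Y ω * Z ω ∂P : ℝ) : EReal)}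

/-!
Every density in the Rényi ball of `EVaR_α^p` has dual norm at most one, since
`E[Y Z] ≤ E[|Y| Z] ≤ EVaR(|Y|)`; this gives `≤`. Conversely, positive homogeneity turns
`‖Z‖* ≤ 1` into `E[g Z] ≤ EVaR(g)` for every nonnegative `g` in the domain. A general `Y` is
made nonnegative by adding `n` and cutting off at `0`: translation equivariance of EVaR absorbs
the shift, and the cut-off changes EVaR by at most `‖(Y + n)⁻‖_p` times a constant (Hölder,
the Rényi constraint bounding `‖Z‖_{p'}`). This error vanishes for `n = ‖Y‖_∞` when `p < 0`
and tends to `0` as `n → ∞` when `p > 1`.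
-/

open Topology

variable {P : Measure Ω}

def IsRenyiAdmissible (P : Measure Ω) (α q : ℝ) (Z : Ω → ℝ) : Prop :=
  IsDensity P Z ∧ RenyiFinite P Z q ∧ renyiEntropy P Z q ≤ Real.log (1 / (1 - α))

section EVaRd

variable {α q : ℝ} {Y : Ω → ℝ}

lemma coe_integral_mul_le_EVaRd {Z : Ω → ℝ} (hZ : IsRenyiAdmissible P α q Z)
    (hYZ : Integrable (fun ω => Y ω * Z ω) P) :
    ((∫ ω, Y ω * Z ω ∂P : ℝ) : EReal) ≤ EVaRd P α q Y :=
  le_sSup ⟨Z, hZ.1, hZ.2.1, hZ.2.2, hYZ, rfl⟩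

lemma EVaRd_le {b : EReal}
    (h : ∀ Z, IsRenyiAdmissible P α q Z → Integrable (fun ω => Y ω * Z ω) P →
      ((∫ ω, Y ω * Z ω ∂P : ℝ) : EReal) ≤ b) :
    EVaRd P α q Y ≤ b :=
  sSup_le fun _ ⟨Z, h₁, h₂, h₃, hYZ, hx⟩ => hx ▸ h Z ⟨h₁, h₂, h₃⟩ hYZ

lemma EVaRd_congr_ae {Y' : Ω → ℝ} (h : Y =ᵐ[P] Y') : EVaRd P α q Y = EVaRd P α q Y' := by
  have key : ∀ {Y₁ Y₂ : Ω → ℝ}, Y₁ =ᵐ[P] Y₂ → EVaRd P α q Y₁ ≤ EVaRd P α q Y₂ := by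
    intro Y₁ Y₂ h
    refine EVaRd_le fun Z hZ hYZ => ?_
    have hmul : (fun ω => Y₁ ω * Z ω) =ᵐ[P] fun ω => Y₂ ω * Z ω :=
      h.mono fun ω hω => by simp only [hω]
    rw [integral_congr_ae hmul]
    exact coe_integral_mul_le_EVaRd hZ (hYZ.congr hmul)
  exact le_antisymm (key h) (key h.symm)

lemma isRenyiAdmissible_one [IsProbabilityMeasure P] (hα : α ∈ Set.Ico 0 1) :
    IsRenyiAdmissible P α q fun _ => 1 := by
  have hL : 0 ≤ Real.log (1 / (1 - α)) :=
    Real.log_nonneg (by rw [le_div_iff₀ (by linarith [hα.2])]; linarith [hα.1])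
  refine ⟨⟨integrable_const 1, ae_of_all _ fun _ => zero_le_one, by simp⟩,
    ⟨fun _ => by simp, fun _ _ => by simp, fun _ => ae_of_all _ fun _ => one_pos⟩, ?_⟩
  unfold renyiEntropy
  split_ifs <;> simpa using hL

lemma coe_integral_le_EVaRd [IsProbabilityMeasure P] (hα : α ∈ Set.Ico 0 1)
    (hY : Integrable Y P) : ((∫ ω, Y ω ∂P : ℝ) : EReal) ≤ EVaRd P α q Y := by
  simpa using coe_integral_mul_le_EVaRd (isRenyiAdmissible_one hα) (by simpa using hY)

lemma EVaRd_add_le {f : Ω → ℝ} {ε : ℝ}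
    (hf : ∀ Z, IsRenyiAdmissible P α q Z →
      Integrable (fun ω => f ω * Z ω) P ∧ ∫ ω, f ω * Z ω ∂P ≤ ε) :
    EVaRd P α q (fun ω => Y ω + f ω) ≤ EVaRd P α q Y + ε := by
  refine EVaRd_le fun Z hZ hYfZ => ?_
  obtain ⟨hfZ, hfZε⟩ := hf Z hZ
  have hYZ : Integrable (fun ω => Y ω * Z ω) P :=
    (hYfZ.sub hfZ).congr (ae_of_all _ fun ω => by simp only [Pi.sub_apply]; ring)
  have hsplit : ∫ ω, (Y ω + f ω) * Z ω ∂P = ∫ ω, Y ω * Z ω ∂P + ∫ ω, f ω * Z ω ∂P := by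
    simp_rw [add_mul]
    exact integral_add hYZ hfZ
  rw [hsplit, EReal.coe_add]
  exact add_le_add (coe_integral_mul_le_EVaRd hZ hYZ) (EReal.coe_le_coe_iff.2 hfZε)

lemma EVaRd_add_const_le (c : ℝ) :
    EVaRd P α q (fun ω => Y ω + c) ≤ EVaRd P α q Y + c :=
  EVaRd_add_le (f := fun _ => c) fun _ hZ =>
    ⟨hZ.1.1.const_mul c, by rw [integral_const_mul, hZ.1.2.2, mul_one]⟩

lemma EVaRd_const_mul_le {c b : ℝ} (hc : 0 < c) (hb : EVaRd P α q Y ≤ b) :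
    EVaRd P α q (fun ω => c * Y ω) ≤ ((c * b : ℝ) : EReal) := by
  refine EVaRd_le fun Z hZ hcYZ => ?_
  have hYZ : Integrable (fun ω => Y ω * Z ω) P := by
    simpa [mul_assoc, hc.ne'] using hcYZ.const_mul c⁻¹
  have h := EReal.coe_le_coe_iff.1 ((coe_integral_mul_le_EVaRd hZ hYZ).trans hb)
  simp_rw [mul_assoc]
  rw [integral_const_mul]
  exact EReal.coe_le_coe_iff.2 (mul_le_mul_of_nonneg_left h hc.le)

end EVaRd

lemma integral_rpow_le_exp_of_renyiEntropy_le {Z : Ω → ℝ} {q L : ℝ} (hq : 1 < q)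
    (h : renyiEntropy P Z q ≤ L) : ∫ ω, Z ω ^ q ∂P ≤ Real.exp ((q - 1) * L) := by
  rw [renyiEntropy, if_neg (by linarith), if_neg hq.ne', inv_mul_le_iff₀ (by linarith)] at h
  rcases le_or_gt (∫ ω, Z ω ^ q ∂P) 0 with h0 | h0
  · exact h0.trans (Real.exp_pos _).le
  · exact (Real.log_le_iff_le_exp h0).1 h

lemma integral_mul_le_of_integral_rpow_le {p q B : ℝ} (hpq : p.HolderConjugate q)
    {f Z : Ω → ℝ} (hf₀ : 0 ≤ᵐ[P] f) (hf : MemLp f (ENNReal.ofReal p) P)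
    (hZ₀ : 0 ≤ᵐ[P] Z) (hZm : AEStronglyMeasurable Z P)
    (hZq : Integrable (fun ω => Z ω ^ q) P) (hB : ∫ ω, Z ω ^ q ∂P ≤ B) :
    Integrable (fun ω => f ω * Z ω) P ∧
      ∫ ω, f ω * Z ω ∂P ≤ (∫ ω, f ω ^ p ∂P) ^ (1 / p) * B ^ (1 / q) := by
  have hZ : MemLp Z (ENNReal.ofReal q) P := by
    rw [← integrable_norm_rpow_iff hZm (by simpa using hpq.symm.pos)
      ENNReal.ofReal_ne_top, ENNReal.toReal_ofReal hpq.symm.nonneg]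
    exact hZq.congr (hZ₀.mono fun ω hω => by simp only [Real.norm_of_nonneg hω])
  have := hpq.ennrealOfReal
  refine ⟨hf.integrable_mul hZ, ?_⟩
  calc ∫ ω, f ω * Z ω ∂P
      ≤ (∫ ω, f ω ^ p ∂P) ^ (1 / p) * (∫ ω, Z ω ^ q ∂P) ^ (1 / q) :=
        integral_mul_le_Lp_mul_Lq_of_nonneg hpq hf₀ hZ₀ hf hZ
    _ ≤ (∫ ω, f ω ^ p ∂P) ^ (1 / p) * B ^ (1 / q) := by
        gcongr
        · exact Real.rpow_nonneg
            (integral_nonneg_of_ae (hf₀.mono fun ω hω => Real.rpow_nonneg hω p)) _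
        · exact integral_nonneg_of_ae (hZ₀.mono fun ω hω => Real.rpow_nonneg hω q)
        · exact hpq.symm.one_div_nonneg

lemma EVaRd_add_le_of_memLp {α p : ℝ} (hp : 1 < p) {Y f : Ω → ℝ} (hf₀ : 0 ≤ᵐ[P] f)
    (hf : MemLp f (ENNReal.ofReal p) P) :
    EVaRd P α (p / (p - 1)) (fun ω => Y ω + f ω) ≤ EVaRd P α (p / (p - 1)) Y +
      ((∫ ω, f ω ^ p ∂P) ^ (1 / p) *
        Real.exp (Real.log (1 / (1 - α)) / p) : ℝ) := by
  have hpq : p.HolderConjugate (p / (p - 1)) :=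
    (Real.holderConjugate_iff_eq_conjExponent hp).2 rfl
  have hC : Real.exp ((p / (p - 1) - 1) * Real.log (1 / (1 - α))) ^ (1 / (p / (p - 1))) =
      Real.exp (Real.log (1 / (1 - α)) / p) := by
    rw [← Real.exp_mul]
    congr 1
    field_simp [hpq.ne_zero, sub_ne_zero.2 hp.ne']
    ring
  refine EVaRd_add_le fun Z hZ => ?_
  rw [← hC]
  exact integral_mul_le_of_integral_rpow_le hpq hf₀ hf hZ.1.2.1
    hZ.1.1.aestronglyMeasurable (hZ.2.1.2.1 hpq.symm.ne_zero hpq.symm.lt.ne')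
    (integral_rpow_le_exp_of_renyiEntropy_le hpq.symm.lt hZ.2.2)

lemma EVaRd_max_add_zero_le_of_memLp [IsFiniteMeasure P] {α p : ℝ} (hp : 1 < p) {Y : Ω → ℝ}
    (hY : MemLp Y (ENNReal.ofReal p) P) (n : ℝ) :
    EVaRd P α (p / (p - 1)) (fun ω => max (Y ω + n) 0) ≤ EVaRd P α (p / (p - 1)) Y + n +
      ((∫ ω, max (-(Y ω + n)) 0 ^ p ∂P) ^ (1 / p) *
        Real.exp (Real.log (1 / (1 - α)) / p) : ℝ) := by
  have hf : MemLp (fun ω => max (-(Y ω + n)) 0) (ENNReal.ofReal p) P := by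
    refine (hY.add (memLp_const n)).of_le ?_ (ae_of_all _ fun ω => ?_)
    · exact ((hY.aestronglyMeasurable.aemeasurable.add_const _).neg.max
        aemeasurable_const).aestronglyMeasurable
    · rw [Real.norm_of_nonneg (le_max_right _ _), Real.norm_eq_abs]
      exact max_le (neg_le_abs _) (abs_nonneg _)
  have hsplit : (fun ω => max (Y ω + n) 0) = fun ω => Y ω + n + max (-(Y ω + n)) 0 :=
    funext fun ω => by linarith [max_zero_sub_max_neg_zero_eq_self (Y ω + n)]
  rw [hsplit]
  exact (EVaRd_add_le_of_memLp hp (ae_of_all _ fun ω => le_max_right (-(Y ω + n)) 0) hf).trans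
    (add_le_add_left (EVaRd_add_const_le n) _)

lemma tendsto_integral_max_neg_add_rpow {p : ℝ} (hp : 0 < p) {Y : Ω → ℝ}
    (hY : MemLp Y (ENNReal.ofReal p) P) :
    Tendsto (fun n : ℕ => ∫ ω, max (-(Y ω + n)) 0 ^ p ∂P) atTop (𝓝 0) := by
  have hbound : Integrable (fun ω => ‖Y ω‖ ^ p) P := by
    simpa [ENNReal.toReal_ofReal hp.le] using
      hY.integrable_norm_rpow (by simpa using hp) ENNReal.ofReal_ne_top
  have hmeas := hY.aestronglyMeasurable.aemeasurable
  have h := tendsto_integral_of_dominated_convergence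
    (F := fun (n : ℕ) ω => max (-(Y ω + n)) 0 ^ p) (f := fun _ => 0) _
    (fun n => ((hmeas.add_const _).neg.max aemeasurable_const).pow_const p
      |>.aestronglyMeasurable) hbound
    (fun n => ae_of_all _ fun ω => by
      have h₀ : 0 ≤ max (-(Y ω + n)) 0 := le_max_right _ _
      rw [Real.norm_of_nonneg (Real.rpow_nonneg h₀ p), Real.norm_eq_abs]
      exact Real.rpow_le_rpow h₀ (max_le (by linarith [neg_le_abs (Y ω), n.cast_nonneg (α := ℝ)])
        (abs_nonneg _)) hp.le)
    (ae_of_all _ fun ω => tendsto_const_nhds.congr' <| by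
      filter_upwards [eventually_ge_atTop ⌈-Y ω⌉₊] with n hn
      rw [max_eq_right (by linarith [Nat.ceil_le.1 hn]), Real.zero_rpow hp.ne'])
  rwa [integral_zero] at h

lemma memDom_iff {p : ℝ} {Y : Ω → ℝ} :
    MemDom P p Y ↔ MemLp Y (if 1 < p then ENNReal.ofReal p else ⊤) P := by
  unfold MemDom
  split_ifs <;> rfl

lemma MemDom.integrable [IsFiniteMeasure P] {p : ℝ} {Y : Ω → ℝ} (hY : MemDom P p Y) :
    Integrable Y P := by
  refine (memDom_iff.1 hY).integrable ?_
  split_ifs with hp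
  · exact ENNReal.one_le_ofReal.2 hp.le
  · exact le_top

section DualNorm

variable {α p : ℝ} {Z : Ω → ℝ}

lemma dualNorm_le_one (hp : p ≠ 1) (hZ : IsRenyiAdmissible P α (p / (p - 1)) Z) :
    dualNorm P α p Z ≤ 1 := by
  refine sSup_le ?_
  rintro _ ⟨Y, -, hY, hYZ, rfl⟩
  rw [EVaR, if_neg hp] at hY
  have hZ₀ := hZ.1.2.1
  have habs : Integrable (fun ω => |Y ω| * Z ω) P :=
    hYZ.abs.congr (hZ₀.mono fun ω hω => by simp only [abs_mul, abs_of_nonneg hω])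
  calc ((∫ ω, Y ω * Z ω ∂P : ℝ) : EReal)
      ≤ ((∫ ω, |Y ω| * Z ω ∂P : ℝ) : EReal) := EReal.coe_le_coe_iff.2 <|
        integral_mono_ae hYZ habs
          (hZ₀.mono fun ω hω => mul_le_mul_of_nonneg_right (le_abs_self _) hω)
    _ ≤ EVaRd P α (p / (p - 1)) fun ω => |Y ω| := coe_integral_mul_le_EVaRd hZ habs
    _ ≤ 1 := hY

variable [IsProbabilityMeasure P]

lemma coe_integral_mul_le_EVaRd_of_nonneg (hp : p ≠ 1) (hα : α ∈ Set.Ico 0 1)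
    (hZ : dualNorm P α p Z ≤ 1) {g : Ω → ℝ} (hg₀ : ∀ ω, 0 ≤ g ω) (hg : MemDom P p g)
    (hgZ : Integrable (fun ω => g ω * Z ω) P) :
    ((∫ ω, g ω * Z ω ∂P : ℝ) : EReal) ≤ EVaRd P α (p / (p - 1)) g := by
  have hnonneg : (0 : EReal) ≤ EVaRd P α (p / (p - 1)) g :=
    (EReal.coe_nonneg.2 (integral_nonneg hg₀)).trans (coe_integral_le_EVaRd hα hg.integrable)
  refine EReal.le_of_forall_lt_iff_le.1 fun b hb => ?_
  have hb₀ : 0 < b := EReal.coe_pos.1 (hnonneg.trans_lt hb)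
  have hscaled : EVaR P α p (fun ω => |b⁻¹ * g ω|) ≤ 1 := by
    rw [EVaR, if_neg hp]
    simpa [abs_of_nonneg, hg₀, hb₀.le, hb₀.ne'] using EVaRd_const_mul_le (inv_pos.2 hb₀) hb.le
  have hmem : MemDom P p fun ω => b⁻¹ * g ω := memDom_iff.2 ((memDom_iff.1 hg).const_mul b⁻¹)
  have hbgZ : Integrable (fun ω => b⁻¹ * g ω * Z ω) P := by
    simpa only [mul_assoc] using hgZ.const_mul b⁻¹
  have h : ((∫ ω, b⁻¹ * g ω * Z ω ∂P : ℝ) : EReal) ≤ 1 :=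
    (le_sSup ⟨_, hmem, hscaled, hbgZ, rfl⟩ : _ ≤ dualNorm P α p Z).trans hZ
  simp_rw [mul_assoc, integral_const_mul] at h
  rw [← EReal.coe_one, EReal.coe_le_coe_iff, inv_mul_le_iff₀ hb₀, mul_one] at h
  exact EReal.coe_le_coe_iff.2 h

lemma coe_integral_mul_add_le_EVaRd_max (hp : p ≠ 1) (hα : α ∈ Set.Ico 0 1)
    (hZd : dualNorm P α p Z ≤ 1) (hZ : Integrable Z P) (hZ₀ : 0 ≤ᵐ[P] Z)
    (hZ₁ : ∫ ω, Z ω ∂P = 1) {Y : Ω → ℝ} (hY : MemDom P p Y)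
    (hYZ : Integrable (fun ω => Y ω * Z ω) P) (n : ℝ) :
    ((∫ ω, Y ω * Z ω ∂P : ℝ) : EReal) + n ≤
      EVaRd P α (p / (p - 1)) fun ω => max (Y ω + n) 0 := by
  have hle : ∀ ω, ‖max (Y ω + n) 0‖ ≤ ‖Y ω + n‖ := fun ω => by
    rw [Real.norm_of_nonneg (le_max_right _ _), Real.norm_eq_abs]
    exact max_le (le_abs_self _) (abs_nonneg _)
  have hm : AEStronglyMeasurable (fun ω => max (Y ω + n) 0) P :=
    ((hY.integrable.aemeasurable.add_const n).max aemeasurable_const).aestronglyMeasurable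
  have hg : MemDom P p fun ω => max (Y ω + n) 0 :=
    memDom_iff.2 (((memDom_iff.1 hY).add (memLp_const n)).of_le hm (ae_of_all _ hle))
  have hYnZ : Integrable (fun ω => (Y ω + n) * Z ω) P :=
    (hYZ.add (hZ.const_mul n)).congr (ae_of_all _ fun ω => by simp only [Pi.add_apply]; ring)
  have hgZ : Integrable (fun ω => max (Y ω + n) 0 * Z ω) P :=
    hYnZ.mono (hm.mul hZ.aestronglyMeasurable) (ae_of_all _ fun ω => by
      simp only [norm_mul]
      exact mul_le_mul_of_nonneg_right (hle ω) (norm_nonneg _))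
  calc ((∫ ω, Y ω * Z ω ∂P : ℝ) : EReal) + n = ((∫ ω, (Y ω + n) * Z ω ∂P : ℝ) : EReal) := by
        simp_rw [add_mul]
        rw [integral_add hYZ (hZ.const_mul n), integral_const_mul, hZ₁, mul_one, EReal.coe_add]
    _ ≤ ((∫ ω, max (Y ω + n) 0 * Z ω ∂P : ℝ) : EReal) := EReal.coe_le_coe_iff.2 <|
        integral_mono_ae hYnZ hgZ
          (hZ₀.mono fun ω hω => mul_le_mul_of_nonneg_right (le_max_left _ _) hω)
    _ ≤ _ := coe_integral_mul_le_EVaRd_of_nonneg hp hα hZd (fun _ => le_max_right _ _) hg hgZ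

lemma coe_integral_mul_le_EVaRd_of_memLp_top (hp : p ≠ 1) (hα : α ∈ Set.Ico 0 1)
    (hZd : dualNorm P α p Z ≤ 1) (hZ : Integrable Z P) (hZ₀ : 0 ≤ᵐ[P] Z)
    (hZ₁ : ∫ ω, Z ω ∂P = 1) {Y : Ω → ℝ} (hY : MemLp Y ⊤ P)
    (hYZ : Integrable (fun ω => Y ω * Z ω) P) :
    ((∫ ω, Y ω * Z ω ∂P : ℝ) : EReal) ≤ EVaRd P α (p / (p - 1)) Y := by
  set n := (eLpNormEssSup Y P).toReal
  have hn : ∀ᵐ ω ∂P, |Y ω| ≤ n := by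
    have hfin : eLpNormEssSup Y P ≠ ⊤ := by simpa using hY.2.ne
    filter_upwards [ae_le_eLpNormEssSup (f := Y) (μ := P)] with ω hω
    simpa using ENNReal.toReal_mono hfin hω
  have hmax : (fun ω => max (Y ω + n) 0) =ᵐ[P] fun ω => Y ω + n :=
    hn.mono fun ω hω => max_eq_left (by linarith [neg_abs_le (Y ω)])
  have h := (coe_integral_mul_add_le_EVaRd_max hp hα hZd hZ hZ₀ hZ₁
    (memDom_iff.2 (hY.mono_exponent le_top)) hYZ n).trans
    ((EVaRd_congr_ae hmax).le.trans (EVaRd_add_const_le n))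
  exact (EReal.addLECancellable_coe n).add_le_add_iff_right.1 h

lemma coe_integral_mul_le_EVaRd_of_memLp (hp : 1 < p) (hα : α ∈ Set.Ico 0 1)
    (hZd : dualNorm P α p Z ≤ 1) (hZ : Integrable Z P) (hZ₀ : 0 ≤ᵐ[P] Z)
    (hZ₁ : ∫ ω, Z ω ∂P = 1) {Y : Ω → ℝ} (hY : MemLp Y (ENNReal.ofReal p) P)
    (hYZ : Integrable (fun ω => Y ω * Z ω) P) :
    ((∫ ω, Y ω * Z ω ∂P : ℝ) : EReal) ≤ EVaRd P α (p / (p - 1)) Y := by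
  set C := Real.exp (Real.log (1 / (1 - α)) / p)
  set δ : ℕ → ℝ := fun n => (∫ ω, max (-(Y ω + n)) 0 ^ p ∂P) ^ (1 / p) * C
  have hbound : ∀ n : ℕ, ((∫ ω, Y ω * Z ω ∂P : ℝ) : EReal) ≤ EVaRd P α (p / (p - 1)) Y + δ n := by
    intro n
    refine (EReal.addLECancellable_coe n).add_le_add_iff_right.1 ?_
    calc ((∫ ω, Y ω * Z ω ∂P : ℝ) : EReal) + n
        ≤ EVaRd P α (p / (p - 1)) fun ω => max (Y ω + n) 0 :=
          coe_integral_mul_add_le_EVaRd_max hp.ne' hα hZd hZ hZ₀ hZ₁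
            (memDom_iff.2 (by simpa [hp] using hY)) hYZ n
      _ ≤ EVaRd P α (p / (p - 1)) Y + n + δ n := EVaRd_max_add_zero_le_of_memLp hp hY n
      _ = EVaRd P α (p / (p - 1)) Y + δ n + n := add_right_comm _ _ _
  have hδ : Tendsto δ atTop (𝓝 0) := by
    have h := ((tendsto_integral_max_neg_add_rpow (by linarith) hY).rpow_const
      (Or.inr (by positivity : (0 : ℝ) ≤ 1 / p))).mul_const C
    rwa [Real.zero_rpow (by positivity), zero_mul] at h
  have hlim : Tendsto (fun n => EVaRd P α (p / (p - 1)) Y + δ n) atTop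
      (𝓝 (EVaRd P α (p / (p - 1)) Y)) := by
    have h := (EReal.continuousAt_add (p := (EVaRd P α (p / (p - 1)) Y, 0))
      (Or.inr EReal.zero_ne_bot) (Or.inr EReal.zero_ne_top)).tendsto.comp
      (tendsto_const_nhds.prodMk_nhds (EReal.tendsto_coe.2 hδ))
    simpa [Function.comp_def] using h
  exact ge_of_tendsto hlim (Eventually.of_forall hbound)

end DualNorm

/-- alternative dual representation of the Entropic Value-at-Risk for
`p > 1` or `p < 0`: `EVaR_α^p(Y) = sup { E[YZ] : Z ≥ 0, E[Z] = 1, ‖Z‖*_{α,p'} ≤ 1 }`. -/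
theorem evar_alt_dual_repr (P : Measure Ω) [IsProbabilityMeasure P]
    (α p : ℝ) (hα : α ∈ Set.Ioo (0 : ℝ) 1) (hp : 1 < p ∨ p < 0)
    (Y : Ω → ℝ) (hY : MemDom P p Y) :
    EVaR P α p Y =
      sSup {x : EReal | ∃ Z : Ω → ℝ, Integrable Z P ∧ 0 ≤ᵐ[P] Z ∧
        (∫ ω, Z ω ∂P) = 1 ∧ dualNorm P α p Z ≤ (1 : EReal) ∧
        Integrable (fun ω => Y ω * Z ω) P ∧
        x = ((∫ ω, Y ω * Z ω ∂P : ℝ) : EReal)} := by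
  have hp₁ : p ≠ 1 := by rintro rfl; norm_num at hp
  have hα' : α ∈ Set.Ico 0 1 := Set.Ioo_subset_Ico_self hα
  rw [EVaR, if_neg hp₁]
  apply le_antisymm
  · refine sSup_le_sSup ?_
    rintro _ ⟨Z, h₁, h₂, h₃, hYZ, rfl⟩
    exact ⟨Z, h₁.1, h₁.2.1, h₁.2.2, dualNorm_le_one hp₁ ⟨h₁, h₂, h₃⟩, hYZ, rfl⟩
  · refine sSup_le ?_
    rintro _ ⟨Z, hZ, hZ₀, hZ₁, hZd, hYZ, rfl⟩
    rcases hp with hp | hp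
    · exact coe_integral_mul_le_EVaRd_of_memLp hp hα' hZd hZ hZ₀ hZ₁
        (by simpa [MemDom, hp] using hY) hYZ
    · exact coe_integral_mul_le_EVaRd_of_memLp_top hp₁ hα' hZd hZ hZ₀ hZ₁
        (by simpa [MemDom, not_lt.2 (hp.trans one_pos).le] using hY) hYZ
end
end
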